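/- Any two d-regular graphs satisfying the diameter-3 maximal structure are isomorphic: if a d-regular graph G consists of two disjoint stars K_{1,d} with roots r, r̃ such that every leaf of one star is adjacent to exactly d−1 leaves of the other star and every edge not inside a star joins a leaf of one star to a leaf of the other, then the non-adjacency relation between the two sets of leaves is a perfect matching, and G is uniquely determined up to isomorphism. -/
import Mathlib


/-- A `d`-regular graph on the vertex set consisting of two star roots `.inl k` (`k = 0, 1`)
and the leaves `.inr (k, i)` of the two stars, having the diameter-3 maximal structure:
each root is adjacent exactly to its own `d` leaves, the roots are non-adjacent, there are
no edges between leaves of the same star, and each leaf of one star is adjacent to exactly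
`d - 1` leaves of the other star. -/
def IsDiam3MaximalStructure (d : ℕ) (G : SimpleGraph (Fin 2 ⊕ Fin 2 × Fin d)) : Prop :=
  (∀ v, {w | G.Adj v w}.ncard = d) ∧
  (∀ k k' i, G.Adj (.inl k) (.inr (k', i)) ↔ k = k') ∧
  (∀ k k', ¬ G.Adj (.inl k) (.inl k')) ∧
  (∀ k i j, ¬ G.Adj (.inr (k, i)) (.inr (k, j))) ∧
  (∀ k i, {j | G.Adj (.inr (k, i)) (.inr (1 - k, j))}.ncard = d - 1)

private lemma exu_aux {d : ℕ} (hd : 1 ≤ d) (P : Fin d → Prop)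
    (h : {j | P j}.ncard = d - 1) : ∃! j, ¬ P j := by
  have key : {j | ¬ P j}.ncard = 1 := by
    have h2 := Set.ncard_add_ncard_compl {j | P j}
    have hc : {j | P j}ᶜ = {j | ¬ P j} := rfl
    rw [hc, h] at h2
    simp [Nat.card_eq_fintype_card] at h2
    omega
  obtain ⟨a, ha⟩ := Set.ncard_eq_one.mp key
  refine ⟨a, ?_, fun y hy => ?_⟩
  · have : a ∈ {j | ¬ P j} := ha ▸ rfl
    exact this
  · have : y ∈ ({a} : Set (Fin d)) := ha ▸ hy
    exact this

theorem diam3Maximal_unique (d : ℕ) (hd : 2 ≤ d)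
    (G G' : SimpleGraph (Fin 2 ⊕ Fin 2 × Fin d))
    (hG : IsDiam3MaximalStructure d G) (hG' : IsDiam3MaximalStructure d G') :
    (∀ i, ∃! j, ¬ G.Adj (.inr (0, i)) (.inr (1, j))) ∧ Nonempty (G ≃g G') := by
  classical
  obtain ⟨hdeg, hroot, hrr, hsame, hcross⟩ := hG
  obtain ⟨hdeg', hroot', hrr', hsame', hcross'⟩ := hG'
  have h10 : (1 - 0 : Fin 2) = 1 := by decide
  have h11 : (1 - 1 : Fin 2) = 0 := by decide
  have exu0 : ∀ i, ∃! j, ¬ G.Adj (.inr (0, i)) (.inr (1, j)) := by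
    intro i
    have h := hcross 0 i
    rw [h10] at h
    exact exu_aux (by omega) _ h
  have exu1 : ∀ i, ∃! j, ¬ G.Adj (.inr (1, i)) (.inr (0, j)) := by
    intro i
    have h := hcross 1 i
    rw [h11] at h
    exact exu_aux (by omega) _ h
  have exu0' : ∀ i, ∃! j, ¬ G'.Adj (.inr (0, i)) (.inr (1, j)) := by
    intro i
    have h := hcross' 0 i
    rw [h10] at h
    exact exu_aux (by omega) _ h
  have exu1' : ∀ i, ∃! j, ¬ G'.Adj (.inr (1, i)) (.inr (0, j)) := by
    intro i
    have h := hcross' 1 i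
    rw [h11] at h
    exact exu_aux (by omega) _ h
  refine ⟨exu0, ?_⟩
  set m0 : Fin d → Fin d := fun i => (exu0 i).choose with hm0def
  set m1 : Fin d → Fin d := fun i => (exu1 i).choose with hm1def
  set m0' : Fin d → Fin d := fun i => (exu0' i).choose with hm0'def
  set m1' : Fin d → Fin d := fun i => (exu1' i).choose with hm1'def
  have pm0 : ∀ i, ¬ G.Adj (.inr (0, i)) (.inr (1, m0 i)) := fun i => (exu0 i).choose_spec.1
  have pm1 : ∀ i, ¬ G.Adj (.inr (1, i)) (.inr (0, m1 i)) := fun i => (exu1 i).choose_spec.1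
  have pm0' : ∀ i, ¬ G'.Adj (.inr (0, i)) (.inr (1, m0' i)) := fun i => (exu0' i).choose_spec.1
  have pm1' : ∀ i, ¬ G'.Adj (.inr (1, i)) (.inr (0, m1' i)) := fun i => (exu1' i).choose_spec.1
  have hm10 : ∀ i, m1 (m0 i) = i :=
    fun i => ((exu1 (m0 i)).choose_spec.2 i (fun h => pm0 i h.symm)).symm
  have hm01 : ∀ j, m0 (m1 j) = j :=
    fun j => ((exu0 (m1 j)).choose_spec.2 j (fun h => pm1 j h.symm)).symm
  have hm10' : ∀ i, m1' (m0' i) = i :=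
    fun i => ((exu1' (m0' i)).choose_spec.2 i (fun h => pm0' i h.symm)).symm
  have hm01' : ∀ j, m0' (m1' j) = j :=
    fun j => ((exu0' (m1' j)).choose_spec.2 j (fun h => pm1' j h.symm)).symm
  have adj01 : ∀ i j, G.Adj (.inr (0, i)) (.inr (1, j)) ↔ j ≠ m0 i := by
    intro i j
    constructor
    · intro h he
      exact pm0 i (he ▸ h)
    · intro hne
      by_contra h
      exact hne ((exu0 i).choose_spec.2 j h)
  have adj01' : ∀ i j, G'.Adj (.inr (0, i)) (.inr (1, j)) ↔ j ≠ m0' i := by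
    intro i j
    constructor
    · intro h he
      exact pm0' i (he ▸ h)
    · intro hne
      by_contra h
      exact hne ((exu0' i).choose_spec.2 j h)
  -- the permutation on side-1 leaves
  set σ : Fin d ≃ Fin d :=
    { toFun := fun j => m0' (m1 j)
      invFun := fun j => m0 (m1' j)
      left_inv := fun j => by simp [hm10', hm01]
      right_inv := fun j => by simp [hm10, hm01'] } with hσdef
  have hσm : ∀ i, σ (m0 i) = m0' i := by
    intro i
    simp [hσdef, hm10]
  have hσne : ∀ i j, σ j ≠ m0' i ↔ j ≠ m0 i := by
    intro i j
    constructor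
    · intro h he
      exact h (by rw [he, hσm])
    · intro h he
      apply h
      have h1 : m1' (σ j) = m1' (m0' i) := congrArg m1' he
      simp only [hσdef, Equiv.coe_fn_mk, hm10'] at h1
      rw [← h1, hm01]
  -- the vertex equivalence
  set e : (Fin 2 ⊕ Fin 2 × Fin d) ≃ (Fin 2 ⊕ Fin 2 × Fin d) :=
    { toFun := fun v => match v with
        | .inl k => .inl k
        | .inr (k, i) => .inr (k, if k = 0 then i else σ i)
      invFun := fun v => match v with
        | .inl k => .inl k
        | .inr (k, i) => .inr (k, if k = 0 then i else σ.symm i)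
      left_inv := fun v => by
        rcases v with k | ⟨k, i⟩
        · rfl
        · by_cases hk : k = 0 <;> simp [hk]
      right_inv := fun v => by
        rcases v with k | ⟨k, i⟩
        · rfl
        · by_cases hk : k = 0 <;> simp [hk] } with hedef
  refine ⟨⟨e, ?_⟩⟩
  intro a b
  rcases a with k | ⟨k, i⟩ <;> rcases b with k' | ⟨k', j⟩
  · simp only [hedef, Equiv.coe_fn_mk]
    constructor
    · intro h; exact absurd h (hrr' k k')
    · intro h; exact absurd h (hrr k k')
  · simp only [hedef, Equiv.coe_fn_mk]
    rw [hroot', hroot]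
  · simp only [hedef, Equiv.coe_fn_mk, SimpleGraph.adj_comm]
    rw [hroot', hroot]
  · fin_cases k <;> fin_cases k' <;>
      simp only [hedef, Equiv.coe_fn_mk, Fin.isValue, Fin.mk_zero, Fin.mk_one,
        one_ne_zero, if_true, if_false, reduceIte]
    · constructor
      · intro h; exact absurd h (hsame' 0 i j)
      · intro h; exact absurd h (hsame 0 i j)
    · rw [adj01', adj01, hσne]
    · rw [SimpleGraph.adj_comm, adj01', SimpleGraph.adj_comm G, adj01, hσne]
    · constructor
      · intro h; exact absurd h (hsame' 1 (σ i) (σ j))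
      · intro h; exact absurd h (hsame 1 i j)
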